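/- Along any finite sequence of atomic bookkeeping moves, the number of odd vertices never decreases. Precisely: define a relation Move on finite multisets of natural numbers by: Move s t holds if and only if there exists an element n of s such that either (split) t = (s.erase n) + m for some finite multiset m of natural numbers with sum n, or (create) t = (s.erase n) + {a+1, b+1} for some natural numbers a, b with a + b = n, or (lose) n ≥ 2 and t = (s.erase n) + {n - 2}. Then whenever t is obtained from s by the reflexive-transitive closure of Move, the number of odd elements of t (counted with multiplicity) is at least the number of odd elements of s (counted with multiplicity). -/

import Mathlib

/-!
Every move replaces one element `n` by a multiset whose sum has the parity of `n` (its sum is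
`n`, `n + 2` or `n - 2`). When `n` is odd, a multiset of odd sum contains an odd element, so no
move lowers the number of odd elements.
-/

/-- The atomic bookkeeping moves on multisets of invalid-edge counts:
(split) replace an element `n` by a multiset `m` with sum `n`;
(create) replace an element `n = a + b` by the two elements `a + 1`, `b + 1`;
(lose) replace an element `n ≥ 2` by `n - 2`. -/
def Move (s t : Multiset ℕ) : Prop :=
  ∃ n ∈ s,
    (∃ m : Multiset ℕ, m.sum = n ∧ t = s.erase n + m) ∨
    (∃ a b : ℕ, a + b = n ∧ t = s.erase n + {a + 1, b + 1}) ∨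
    (2 ≤ n ∧ t = s.erase n + {n - 2})

theorem Multiset.exists_odd_of_odd_sum {m : Multiset ℕ} (h : Odd m.sum) : ∃ k ∈ m, Odd k := by
  by_contra! hm
  exact Nat.not_even_iff_odd.mpr h <|
    m.sum_induction Even (fun _ _ => Even.add) .zero fun k hk => Nat.not_odd_iff_even.mp (hm k hk)

theorem Multiset.countP_odd_le_erase_add {s m : Multiset ℕ} {n : ℕ} (hn : n ∈ s)
    (hm : Odd n → Odd m.sum) : s.countP Odd ≤ (s.erase n + m).countP Odd := by
  conv_lhs => rw [← Multiset.cons_erase hn]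
  rw [Multiset.countP_cons, Multiset.countP_add]
  split_ifs with hodd
  · have := Multiset.countP_pos.mpr (Multiset.exists_odd_of_odd_sum (hm hodd))
    omega
  · omega

theorem Move.exists_eq_erase_add {s t : Multiset ℕ} (h : Move s t) :
    ∃ n ∈ s, ∃ m : Multiset ℕ, (Odd n → Odd m.sum) ∧ t = s.erase n + m := by
  obtain ⟨n, hn, ⟨m, hm, ht⟩ | ⟨a, b, hab, ht⟩ | ⟨h2, ht⟩⟩ := h
  · exact ⟨n, hn, m, hm ▸ id, ht⟩
  · refine ⟨n, hn, {a + 1, b + 1}, fun hodd => ?_, ht⟩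
    rw [Multiset.insert_eq_cons, Multiset.sum_cons, Multiset.sum_singleton,
      show a + 1 + (b + 1) = n + 2 by omega]
    exact hodd.add_even even_two
  · exact ⟨n, hn, {n - 2}, fun hodd => by simpa using Nat.Odd.sub_even h2 hodd even_two, ht⟩

theorem Move.countP_odd_le {s t : Multiset ℕ} (h : Move s t) : s.countP Odd ≤ t.countP Odd := by
  obtain ⟨n, hn, m, hm, rfl⟩ := h.exists_eq_erase_add
  exact Multiset.countP_odd_le_erase_add hn hm

/-- Along any finite sequence of atomic bookkeeping moves, the number of odd
elements (counted with multiplicity) never decreases. -/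
theorem odd_count_mono_of_reflTransGen_move (s t : Multiset ℕ)
    (h : Relation.ReflTransGen Move s t) :
    s.countP (fun k => Odd k) ≤ t.countP (fun k => Odd k) := by
  simpa [Relation.reflTransGen_eq_self] using
    h.lift (fun s => s.countP Odd) fun _ _ => Move.countP_odd_le
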